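/- arXiv:math/0606199 — 3 statements merged into one kernel-verified Lean document; each statement's English description precedes it below -/
import Mathlib

section
/- Let φ : G → ℝ be a homogeneous quasi-homomorphism on a group G, and let D ≥ 0 satisfy |φ(xy) − φ(x) − φ(y)| ≤ D for all x, y ∈ G. If g ∈ G is a product of n ≥ 1 commutators, i.e. g = [a₁,b₁]·…·[aₙ,bₙ] with [a,b] = aba⁻¹b⁻¹, then |φ(g)| ≤ (2n − 1)·D. -/
/-!
A homogeneous quasi-homomorphism is conjugation invariant: `φ(a xᵐ a⁻¹)` and `φ(xᵐ)` differ by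
at most `2D`, and by homogeneity this difference is `m` times `φ(a x a⁻¹) - φ(x)`. Hence
`φ([a,b]) = φ(a b a⁻¹) + φ(b⁻¹) + O(D) = O(D)`, and splitting a product of `n` commutators
costs `n - 1` further defects.
-/

theorem eq_zero_of_forall_natCast_mul_abs_le {c B : ℝ} (h : ∀ m : ℕ, m * |c| ≤ B) : c = 0 := by
  by_contra hc
  have hc_pos : 0 < |c| := abs_pos.mpr hc
  obtain ⟨m, hm⟩ := exists_nat_gt (B / |c|)
  have := h m
  rw [div_lt_iff₀ hc_pos] at hm
  linarith

section Quasimorphism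

variable {G : Type*} [Group G] {φ : G → ℝ} {D : ℝ}

theorem abs_map_mul_le (h_quasi : ∀ x y : G, |φ (x * y) - φ x - φ y| ≤ D) (x y : G) :
    |φ (x * y)| ≤ |φ x| + |φ y| + D := by
  have := h_quasi x y
  calc |φ (x * y)| = |φ x + φ y + (φ (x * y) - φ x - φ y)| := by ring_nf
    _ ≤ |φ x| + |φ y| + |φ (x * y) - φ x - φ y| := abs_add_three _ _ _
    _ ≤ |φ x| + |φ y| + D := by gcongr

theorem abs_map_list_prod_add_le (h_quasi : ∀ x y : G, |φ (x * y) - φ x - φ y| ≤ D)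
    (x : G) (s : List G) :
    |φ (x :: s).prod| + D ≤ ((x :: s).map fun y => |φ y| + D).sum := by
  induction s generalizing x with
  | nil => simp
  | cons y s ih =>
    have := abs_map_mul_le h_quasi x (y :: s).prod
    have := ih y
    simp only [List.prod_cons, List.map_cons, List.sum_cons] at *
    linarith

variable (h_hom : ∀ (x : G) (n : ℤ), φ (x ^ n) = n * φ x)
include h_hom

theorem map_inv_of_map_zpow (x : G) : φ x⁻¹ = -φ x := by
  simpa using h_hom x (-1)

theorem map_pow_of_map_zpow (x : G) (m : ℕ) : φ (x ^ m) = m * φ x := by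
  simpa using h_hom x m

theorem abs_map_conj_sub_le (h_quasi : ∀ x y : G, |φ (x * y) - φ x - φ y| ≤ D) (a y : G) :
    |φ (a * y * a⁻¹) - φ y| ≤ 2 * D := by
  have h₁ := abs_le.mp (h_quasi a (y * a⁻¹))
  have h₂ := abs_le.mp (h_quasi y a⁻¹)
  rw [map_inv_of_map_zpow h_hom, ← mul_assoc] at *
  exact abs_le.mpr ⟨by linarith, by linarith⟩

theorem map_conj (h_quasi : ∀ x y : G, |φ (x * y) - φ x - φ y| ≤ D) (a x : G) :
    φ (a * x * a⁻¹) = φ x := by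
  refine sub_eq_zero.mp (eq_zero_of_forall_natCast_mul_abs_le (B := 2 * D) fun m => ?_)
  have := abs_map_conj_sub_le h_hom h_quasi a (x ^ m)
  rwa [← conj_pow, map_pow_of_map_zpow h_hom, map_pow_of_map_zpow h_hom, ← mul_sub, abs_mul,
    Nat.abs_cast] at this

theorem abs_map_commutator_le (h_quasi : ∀ x y : G, |φ (x * y) - φ x - φ y| ≤ D) (a b : G) :
    |φ (a * b * a⁻¹ * b⁻¹)| ≤ D := by
  simpa [map_conj h_hom h_quasi, map_inv_of_map_zpow h_hom] using h_quasi (a * b * a⁻¹) b⁻¹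

end Quasimorphism

theorem homogeneous_quasimorphism_commutator_product_bound_general {G : Type*} [Group G] (φ : G → ℝ)
    (D : ℝ)
    (h_quasi : ∀ x y : G, |φ (x * y) - φ x - φ y| ≤ D)
    (h_hom : ∀ (x : G) (n : ℤ), φ (x ^ n) = n * φ x)
    (g : G) (n : ℕ) (hn : 1 ≤ n)
    (l : List G) (h_len : l.length = n)
    (h_comm : ∀ x ∈ l, ∃ a b : G, x = a * b * a⁻¹ * b⁻¹)
    (h_prod : g = l.prod) :
    |φ g| ≤ (2 * (n : ℝ) - 1) * D := by
  obtain ⟨x, s, rfl⟩ := List.exists_cons_of_length_pos (h_len ▸ hn)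
  have h_terms : ∀ t ∈ (x :: s).map fun y => |φ y| + D, t ≤ 2 * D := by
    simp only [List.mem_map]
    rintro _ ⟨y, hy, rfl⟩
    obtain ⟨a, b, rfl⟩ := h_comm y hy
    linarith [abs_map_commutator_le h_hom h_quasi a b]
  have h_sum := List.sum_le_card_nsmul _ _ h_terms
  rw [List.length_map, h_len, nsmul_eq_mul] at h_sum
  rw [h_prod]
  linarith [abs_map_list_prod_add_le h_quasi x s]

/-- If `g` is a product of `n ≥ 1` commutators, then any homogeneous
quasi-homomorphism `φ` with defect bound `D` satisfies `|φ g| ≤ (2n - 1) * D`. -/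
theorem homogeneous_quasimorphism_commutator_product_bound {G : Type*} [Group G] (φ : G → ℝ)
    (D : ℝ) (hD : 0 ≤ D)
    (h_quasi : ∀ x y : G, |φ (x * y) - φ x - φ y| ≤ D)
    (h_hom : ∀ (x : G) (n : ℤ), φ (x ^ n) = n * φ x)
    (g : G) (n : ℕ) (hn : 1 ≤ n)
    (l : List G) (h_len : l.length = n)
    (h_comm : ∀ x ∈ l, ∃ a b : G, x = a * b * a⁻¹ * b⁻¹)
    (h_prod : g = l.prod) :
    |φ g| ≤ (2 * (n : ℝ) - 1) * D :=
  homogeneous_quasimorphism_commutator_product_bound_general φ D h_quasi h_hom g n hn l h_len h_comm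
    h_prod
end

section
/- Let G be a group, g ∈ G, φ : G → ℝ a homogeneous quasi-homomorphism, and D ≥ 0 a constant with |φ(xy) − φ(x) − φ(y)| ≤ D for all x, y ∈ G. If for some integer k ≥ 1 the power gᵏ is a product of n ≥ 1 torsion elements, then |φ(g)| ≤ n·D/k. -/
/-!
Homogeneity forces `φ` to vanish on torsion elements, and the defect bound lets `φ` of a product
of `n` elements differ from the sum of the values by at most `n * D`. Applied to
`g ^ k = x₁ ⋯ xₙ` with torsion `xᵢ`, this gives `k * |φ g| = |φ (g ^ k)| ≤ n * D`.
-/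

section Quasimorphism

variable {G : Type*} [Group G] {φ : G → ℝ}

lemma map_one_eq_zero_of_homogeneous (h_hom : ∀ (x : G) (n : ℤ), φ (x ^ n) = n * φ x) :
    φ 1 = 0 := by
  simpa using h_hom 1 0

lemma map_eq_zero_of_homogeneous_of_isOfFinOrder
    (h_hom : ∀ (x : G) (n : ℤ), φ (x ^ n) = n * φ x) {x : G} (hx : IsOfFinOrder x) :
    φ x = 0 := by
  obtain ⟨m, hm, hxm⟩ := hx.exists_pow_eq_one
  have h := h_hom x m
  rw [zpow_natCast, hxm, map_one_eq_zero_of_homogeneous h_hom, eq_comm] at h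
  exact (mul_eq_zero.mp h).resolve_left (Nat.cast_ne_zero.mpr hm.ne')

lemma abs_map_list_prod_sub_sum_le {D : ℝ} (h_one : φ 1 = 0)
    (h_quasi : ∀ x y : G, |φ (x * y) - φ x - φ y| ≤ D) (l : List G) :
    |φ l.prod - (l.map φ).sum| ≤ l.length * D := by
  induction l with
  | nil => simp [h_one]
  | cons a t ih =>
    calc |φ (a * t.prod) - (φ a + (t.map φ).sum)|
        = |(φ (a * t.prod) - φ a - φ t.prod) + (φ t.prod - (t.map φ).sum)| := by ring_nf
      _ ≤ D + t.length * D := (abs_add_le _ _).trans (add_le_add (h_quasi _ _) ih)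
      _ = (a :: t).length * D := by push_cast [List.length_cons]; ring

end Quasimorphism

theorem homogeneous_quasimorphism_power_torsion_bound_general {G : Type*} [Group G]
    (g : G) (φ : G → ℝ) (D : ℝ)
    (h_quasi : ∀ x y : G, |φ (x * y) - φ x - φ y| ≤ D)
    (h_hom : ∀ (x : G) (n : ℤ), φ (x ^ n) = n * φ x)
    (k : ℕ) (hk : 1 ≤ k) (n : ℕ)
    (l : List G) (h_len : l.length = n)
    (h_tor : ∀ x ∈ l, ∃ m : ℕ, 0 < m ∧ x ^ m = 1)
    (h_prod : g ^ k = l.prod) :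
    |φ g| ≤ (n : ℝ) * D / (k : ℝ) := by
  have h_sum : (l.map φ).sum = 0 := List.sum_eq_zero fun y hy => by
    obtain ⟨x, hx, rfl⟩ := List.mem_map.mp hy
    exact map_eq_zero_of_homogeneous_of_isOfFinOrder h_hom
      (isOfFinOrder_iff_pow_eq_one.mpr (h_tor x hx))
  have h_bound := abs_map_list_prod_sub_sum_le (map_one_eq_zero_of_homogeneous h_hom) h_quasi l
  have h_pow : φ (g ^ k) = k * φ g := by exact_mod_cast h_hom g k
  have hk_pos : (0 : ℝ) < k := by exact_mod_cast hk
  rw [h_sum, sub_zero, ← h_prod, h_pow, abs_mul, Nat.abs_cast, h_len] at h_bound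
  rw [le_div_iff₀ hk_pos]
  linarith

/-- If for some `k ≥ 1` the power `g ^ k` is a product of `n ≥ 1` torsion elements, then
any homogeneous quasi-homomorphism `φ` with defect bound `D` satisfies
`|φ g| ≤ n * D / k`. -/
theorem homogeneous_quasimorphism_power_torsion_bound {G : Type*} [Group G]
    (g : G) (φ : G → ℝ) (D : ℝ) (hD : 0 ≤ D)
    (h_quasi : ∀ x y : G, |φ (x * y) - φ x - φ y| ≤ D)
    (h_hom : ∀ (x : G) (n : ℤ), φ (x ^ n) = n * φ x)
    (k : ℕ) (hk : 1 ≤ k) (n : ℕ) (hn : 1 ≤ n)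
    (l : List G) (h_len : l.length = n)
    (h_tor : ∀ x ∈ l, ∃ m : ℕ, 0 < m ∧ x ^ m = 1)
    (h_prod : g ^ k = l.prod) :
    |φ g| ≤ (n : ℝ) * D / (k : ℝ) :=
  homogeneous_quasimorphism_power_torsion_bound_general g φ D h_quasi h_hom k hk n l h_len h_tor
    h_prod
end

section
/- Let G be a group, let a, b, c ∈ G pairwise commute, and let φ, ψ ∈ G be involutions (φ² = ψ² = 1) such that φcφ⁻¹ = a and ψcψ⁻¹ = b. Then for every integer k, (a⁻¹b⁻¹c²)ᵏ = [cᵏ, φ]·[cᵏ, ψ], where [x,y] = xyx⁻¹y⁻¹. In particular each power of a⁻¹b⁻¹c² is a product of two commutators. -/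
/-!
Conjugating by `φ` turns `c` into `a`, so `[cᵏ, φ] = cᵏ · a⁻ᵏ`, and likewise `[cᵏ, ψ] = cᵏ · b⁻ᵏ`.
Since `a, b, c` commute, the product of these two is `(c a⁻¹ · c b⁻¹)ᵏ = (a⁻¹b⁻¹c²)ᵏ`.
-/

open scoped commutatorElement

section

variable {G : Type*} [Group G]

theorem commutatorElement_zpow_left_of_conj_eq {c φ a : G} (h : φ * c * φ⁻¹ = a) (k : ℤ) :
    ⁅c ^ k, φ⁆ = c ^ k * (a ^ k)⁻¹ := by
  rw [commutatorElement_def, ← h, conj_zpow]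
  group

theorem zpow_inv_mul_inv_mul_sq {a b c : G} (hab : Commute a b) (hac : Commute a c)
    (hbc : Commute b c) (k : ℤ) :
    (a⁻¹ * b⁻¹ * c ^ 2) ^ k = c ^ k * (a ^ k)⁻¹ * (c ^ k * (b ^ k)⁻¹) := by
  have hca : Commute c a⁻¹ := hac.symm.inv_right
  have hcb : Commute c b⁻¹ := hbc.symm.inv_right
  have hsplit : a⁻¹ * b⁻¹ * c ^ 2 = c * a⁻¹ * (c * b⁻¹) := calc
    a⁻¹ * b⁻¹ * c ^ 2 = c ^ 2 * (a⁻¹ * b⁻¹) := ((hca.mul_right hcb).pow_left 2).symm.eq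
    _ = c * (c * a⁻¹) * b⁻¹ := by simp only [sq, mul_assoc]
    _ = c * (a⁻¹ * c) * b⁻¹ := by rw [hca.eq]
    _ = c * a⁻¹ * (c * b⁻¹) := by simp only [mul_assoc]
  have hcomm : Commute (c * a⁻¹) (c * b⁻¹) :=
    ((Commute.refl c).mul_right hcb).mul_left (hca.symm.mul_right hab.inv_inv)
  rw [hsplit, hcomm.mul_zpow, hca.mul_zpow, hcb.mul_zpow, inv_zpow, inv_zpow]

end

theorem power_eq_product_of_two_commutators_general {G : Type*} [Group G]
    (a b c φ ψ : G)
    (hab : a * b = b * a) (hac : a * c = c * a) (hbc : b * c = c * b)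
    (hφc : φ * c * φ⁻¹ = a) (hψc : ψ * c * ψ⁻¹ = b) :
    (∀ k : ℤ, (a⁻¹ * b⁻¹ * c ^ 2) ^ k =
      (c ^ k * φ * (c ^ k)⁻¹ * φ⁻¹) * (c ^ k * ψ * (c ^ k)⁻¹ * ψ⁻¹)) ∧
    (∀ k : ℤ, ∃ p q r s : G, (a⁻¹ * b⁻¹ * c ^ 2) ^ k =
      (p * q * p⁻¹ * q⁻¹) * (r * s * r⁻¹ * s⁻¹)) := by
  have key (k : ℤ) : (a⁻¹ * b⁻¹ * c ^ 2) ^ k =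
      (c ^ k * φ * (c ^ k)⁻¹ * φ⁻¹) * (c ^ k * ψ * (c ^ k)⁻¹ * ψ⁻¹) := by
    rw [← commutatorElement_def, ← commutatorElement_def,
      commutatorElement_zpow_left_of_conj_eq hφc, commutatorElement_zpow_left_of_conj_eq hψc]
    exact zpow_inv_mul_inv_mul_sq hab hac hbc k
  exact ⟨key, fun k => ⟨_, _, _, _, key k⟩⟩

/-- If `a, b, c` pairwise commute and `φ, ψ` are involutions with `φcφ⁻¹ = a` and
`ψcψ⁻¹ = b`, then `(a⁻¹b⁻¹c²)ᵏ = [cᵏ, φ] · [cᵏ, ψ]` for every integer `k`; in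
particular each power of `a⁻¹b⁻¹c²` is a product of two commutators. -/
theorem power_eq_product_of_two_commutators {G : Type*} [Group G]
    (a b c φ ψ : G)
    (hab : a * b = b * a) (hac : a * c = c * a) (hbc : b * c = c * b)
    (hφ : φ ^ 2 = 1) (hψ : ψ ^ 2 = 1)
    (hφc : φ * c * φ⁻¹ = a) (hψc : ψ * c * ψ⁻¹ = b) :
    (∀ k : ℤ, (a⁻¹ * b⁻¹ * c ^ 2) ^ k =
      (c ^ k * φ * (c ^ k)⁻¹ * φ⁻¹) * (c ^ k * ψ * (c ^ k)⁻¹ * ψ⁻¹)) ∧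
    (∀ k : ℤ, ∃ p q r s : G, (a⁻¹ * b⁻¹ * c ^ 2) ^ k =
      (p * q * p⁻¹ * q⁻¹) * (r * s * r⁻¹ * s⁻¹)) :=
  power_eq_product_of_two_commutators_general a b c φ ψ hab hac hbc hφc hψc
end
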